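/- arXiv:2107.13658 — 3 statements merged into one kernel-verified Lean document; each statement's English description precedes it below -/
import Mathlib

section
/- There exists a single-source single-sink upward outerplanar DAG on 6 vertices {a,b,c,d,e,f} with exactly two linear extensions, namely [a,b,c,d,e,f] and [a,b,d,c,e,f], and in both orders the edge set contains a 3-twist, so its stack number is exactly 3 (an explicit 2-stack layout does not exist but a 3-stack layout does). -/
/-- The vertex set of a directed edge set. -/
def verts (E : Finset (ℕ × ℕ)) : Finset ℕ := E.image Prod.fst ∪ E.image Prod.snd

/-- Two directed edges cross with respect to a vertex order `f`
(the order places vertex `v` at position `f v`). -/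
def Crosses (f : ℕ → ℕ) (e e' : ℕ × ℕ) : Prop :=
  (f e.1 < f e'.1 ∧ f e'.1 < f e.2 ∧ f e.2 < f e'.2) ∨
  (f e'.1 < f e.1 ∧ f e.1 < f e'.2 ∧ f e'.2 < f e.2)

/-- `f` is (an injective position function representing) a linear extension of `E`. -/
def LinExt (E : Finset (ℕ × ℕ)) (f : ℕ → ℕ) : Prop :=
  Function.Injective f ∧ ∀ e ∈ E, f e.1 < f e.2

/-- The edges `(s i, t i)` form a `k`-twist under `f`:
`s 0 < … < s (k-1) < t 0 < … < t (k-1)`. -/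
def IsTwist (E : Finset (ℕ × ℕ)) (f : ℕ → ℕ) (k : ℕ) (s t : Fin k → ℕ) : Prop :=
  (∀ i, (s i, t i) ∈ E) ∧ StrictMono (f ∘ s) ∧ StrictMono (f ∘ t) ∧
    ∀ i j, f (s i) < f (t j)

/-- The maximum twist size of `E` under `f` is at most `k`. -/
def TwistLE (E : Finset (ℕ × ℕ)) (f : ℕ → ℕ) (k : ℕ) : Prop :=
  ∀ m, ∀ s t : Fin m → ℕ, IsTwist E f m s t → m ≤ k

/-- `c` assigns edges to stacks: edges in the same stack never cross. -/
def ValidStacks (E : Finset (ℕ × ℕ)) (f : ℕ → ℕ) (c : ℕ × ℕ → ℕ) : Prop :=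
  ∀ e ∈ E, ∀ e' ∈ E, c e = c e' → ¬ Crosses f e e'

/-- `E` admits a `k`-stack layout: a linear extension together with a
partition of the edges into `k` stacks of pairwise non-crossing edges. -/
def HasStackLayout (E : Finset (ℕ × ℕ)) (k : ℕ) : Prop :=
  ∃ f c, LinExt E f ∧ (∀ e ∈ E, c e < k) ∧ ValidStacks E f c

/-- The single-source single-sink upward outerplanar DAG from the paper on the
six vertices `a,…,f = 0,…,5`. -/
def lowerBoundODAG : Finset (ℕ × ℕ) :=
  {(0, 1), (0, 2), (1, 2), (1, 3), (1, 4), (2, 4), (3, 4), (3, 5), (4, 5)}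

lemma linext_cases (f : ℕ → ℕ) (h : LinExt lowerBoundODAG f) :
    (f 0 < f 1 ∧ f 1 < f 2 ∧ f 2 < f 3 ∧ f 3 < f 4 ∧ f 4 < f 5) ∨
    (f 0 < f 1 ∧ f 1 < f 3 ∧ f 3 < f 2 ∧ f 2 < f 4 ∧ f 4 < f 5) := by
  obtain ⟨hinj, he⟩ := h
  have e01 := he (0,1) (by decide)
  have e12 := he (1,2) (by decide)
  have e13 := he (1,3) (by decide)
  have e24 := he (2,4) (by decide)
  have e34 := he (3,4) (by decide)
  have e45 := he (4,5) (by decide)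
  simp only at *
  rcases lt_trichotomy (f 2) (f 3) with hc | hc | hc
  · exact Or.inl ⟨e01, e12, hc, e34, e45⟩
  · exact absurd (hinj hc) (by decide)
  · exact Or.inr ⟨e01, e13, hc, e24, e45⟩

def g2 : ℕ → ℕ := fun n => if n = 2 then 3 else if n = 3 then 2 else n

lemma g2_inj : Function.Injective g2 := by
  intro a b h
  unfold g2 at h
  split_ifs at h <;> omega

def col3 : ℕ × ℕ → ℕ :=
  fun e => if e = (1,3) then 1 else if e = (3,5) then 1 else if e = (1,4) then 2 else 0

/-- There is a single-source single-sink (upward outerplanar) DAG on six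
vertices `a,…,f` with exactly two linear extensions, `[a,b,c,d,e,f]` and
`[a,b,d,c,e,f]`; both require three stacks, so its stack number is exactly 3:
there is no 2-stack layout but there is a 3-stack layout. -/
theorem exists_six_vertex_odag_stack_number_three :
    ∃ E : Finset (ℕ × ℕ), E = lowerBoundODAG ∧
      (verts E).card = 6 ∧
      (∃! v, v ∈ verts E ∧ ∀ u, (u, v) ∉ E) ∧
      (∃! v, v ∈ verts E ∧ ∀ u, (v, u) ∉ E) ∧
      (∀ f, LinExt E f →
        (f 0 < f 1 ∧ f 1 < f 2 ∧ f 2 < f 3 ∧ f 3 < f 4 ∧ f 4 < f 5) ∨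
        (f 0 < f 1 ∧ f 1 < f 3 ∧ f 3 < f 2 ∧ f 2 < f 4 ∧ f 4 < f 5)) ∧
      (∃ f, LinExt E f ∧ f 0 < f 1 ∧ f 1 < f 2 ∧ f 2 < f 3 ∧ f 3 < f 4 ∧ f 4 < f 5) ∧
      (∃ f, LinExt E f ∧ f 0 < f 1 ∧ f 1 < f 3 ∧ f 3 < f 2 ∧ f 2 < f 4 ∧ f 4 < f 5) ∧
      ¬ HasStackLayout E 2 ∧ HasStackLayout E 3 := by
  refine ⟨lowerBoundODAG, rfl, by decide, ?_, ?_, linext_cases, ?_, ?_, ?_, ?_⟩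
  · -- unique source
    refine ⟨0, ⟨by decide, ?_⟩, ?_⟩
    · intro u h
      simp [lowerBoundODAG] at h
    · rintro v ⟨hv, hno⟩
      fin_cases hv <;>
        first
        | rfl
        | (exfalso; first
            | exact hno 0 (by decide)
            | exact hno 1 (by decide)
            | exact hno 3 (by decide))
  · -- unique sink
    refine ⟨5, ⟨by decide, ?_⟩, ?_⟩
    · intro u h
      simp [lowerBoundODAG] at h
    · rintro v ⟨hv, hno⟩
      fin_cases hv <;>
        first
        | rfl
        | (exfalso; first
            | exact hno 1 (by decide)
            | exact hno 2 (by decide)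
            | exact hno 4 (by decide)
            | exact hno 5 (by decide))
  · exact ⟨id, ⟨Function.injective_id, by decide⟩, by decide⟩
  · exact ⟨g2, ⟨g2_inj, by decide⟩, by decide⟩
  · -- no 2-stack layout
    rintro ⟨f, c, hlin, hlt, hval⟩
    have l02 := hlt (0,2) (by decide)
    have l13 := hlt (1,3) (by decide)
    have l14 := hlt (1,4) (by decide)
    have l24 := hlt (2,4) (by decide)
    have l35 := hlt (3,5) (by decide)
    rcases linext_cases f hlin with ⟨h1,h2,h3,h4,h5⟩ | ⟨h1,h2,h3,h4,h5⟩
    · -- order 0,1,2,3,4,5 : 5-cycle 02-13-24-35-14-02 in crossing graph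
      have n1 : c (0,2) ≠ c (1,3) := fun h =>
        hval (0,2) (by decide) (1,3) (by decide) h (by unfold Crosses; dsimp only; omega)
      have n2 : c (1,3) ≠ c (2,4) := fun h =>
        hval (1,3) (by decide) (2,4) (by decide) h (by unfold Crosses; dsimp only; omega)
      have n3 : c (2,4) ≠ c (3,5) := fun h =>
        hval (2,4) (by decide) (3,5) (by decide) h (by unfold Crosses; dsimp only; omega)
      have n4 : c (3,5) ≠ c (1,4) := fun h =>
        hval (3,5) (by decide) (1,4) (by decide) h (by unfold Crosses; dsimp only; omega)
      have n5 : c (1,4) ≠ c (0,2) := fun h =>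
        hval (1,4) (by decide) (0,2) (by decide) h (by unfold Crosses; dsimp only; omega)
      omega
    · -- order 0,1,3,2,4,5 : 3-twist 02,14,35
      have n1 : c (0,2) ≠ c (1,4) := fun h =>
        hval (0,2) (by decide) (1,4) (by decide) h (by unfold Crosses; dsimp only; omega)
      have n2 : c (1,4) ≠ c (3,5) := fun h =>
        hval (1,4) (by decide) (3,5) (by decide) h (by unfold Crosses; dsimp only; omega)
      have n3 : c (0,2) ≠ c (3,5) := fun h =>
        hval (0,2) (by decide) (3,5) (by decide) h (by unfold Crosses; dsimp only; omega)
      omega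
  · exact ⟨id, col3, ⟨Function.injective_id, by decide⟩, by decide, by unfold ValidStacks Crosses; decide⟩
end

section
/- If a DAG G contains k vertex-disjoint directed edges (u_1,v_1),...,(u_k,v_k) together with directed paths u_i ⇝ u_{i+1} for all i < k, directed paths v_i ⇝ v_{i+1} for all i < k, and a directed path u_k ⇝ v_1 (so that u_1 < ... < u_k < v_1 < ... < v_k in every linear extension), then the stack number of G is at least k. -/
/-- `a` reaches `b` by a directed path in `E`. -/
def Reaches (E : Finset (ℕ × ℕ)) : ℕ → ℕ → Prop :=
  Relation.ReflTransGen (fun a b => (a, b) ∈ E)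

/-- If a DAG contains `k` vertex-disjoint edges `(u_i, v_i)` together with
directed paths `u_i ⇝ u_{i+1}`, `v_i ⇝ v_{i+1}` and `u_{k-1} ⇝ v_0`, then
these edges form a `k`-twist in every linear extension, hence the stack
number of the DAG is at least `k`. -/
theorem forced_twist_lower_bound (E : Finset (ℕ × ℕ)) (k : ℕ) (hk : 1 ≤ k)
    (u v : Fin k → ℕ)
    (hdisj : ∀ i j : Fin k, u i ≠ v j)
    (hu : Function.Injective u) (hv : Function.Injective v)
    (hedges : ∀ i, (u i, v i) ∈ E)
    (hpu : ∀ i : Fin k, ∀ h : (i : ℕ) + 1 < k, Reaches E (u i) (u ⟨i + 1, h⟩))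
    (hpv : ∀ i : Fin k, ∀ h : (i : ℕ) + 1 < k, Reaches E (v i) (v ⟨i + 1, h⟩))
    (huv : Reaches E (u ⟨k - 1, Nat.sub_lt hk Nat.one_pos⟩) (v ⟨0, hk⟩)) :
    ∀ f c j, LinExt E f → (∀ e ∈ E, c e < j) → ValidStacks E f c → k ≤ j := by
  intro f c j hf hbound hvalid
  have hmono : ∀ a b, Reaches E a b → f a ≤ f b := by
    intro a b h
    induction h with
    | refl => exact le_refl _
    | tail _ hbc ih => exact ih.trans (hf.2 _ hbc).le
  have stepu : ∀ (n : ℕ) (h : n + 1 < k),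
      f (u ⟨n, Nat.lt_of_succ_lt h⟩) < f (u ⟨n + 1, h⟩) := by
    intro n h
    refine lt_of_le_of_ne (hmono _ _ (hpu ⟨n, Nat.lt_of_succ_lt h⟩ h)) ?_
    intro heq
    have := hu (hf.1 heq)
    simp [Fin.ext_iff] at this
  have stepv : ∀ (n : ℕ) (h : n + 1 < k),
      f (v ⟨n, Nat.lt_of_succ_lt h⟩) < f (v ⟨n + 1, h⟩) := by
    intro n h
    refine lt_of_le_of_ne (hmono _ _ (hpv ⟨n, Nat.lt_of_succ_lt h⟩ h)) ?_
    intro heq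
    have := hv (hf.1 heq)
    simp [Fin.ext_iff] at this
  have chainu : ∀ (m : ℕ) (hm : m < k) (i : Fin k), (i : ℕ) < m → f (u i) < f (u ⟨m, hm⟩) := by
    intro m
    induction m with
    | zero => intro _ i hi; exact absurd hi (Nat.not_lt_zero _)
    | succ n ih =>
      intro hm i hi
      rcases Nat.lt_succ_iff_lt_or_eq.mp hi with h' | h'
      · exact (ih (Nat.lt_of_succ_lt hm) i h').trans (stepu n hm)
      · have : i = ⟨n, Nat.lt_of_succ_lt hm⟩ := Fin.ext h'
        rw [this]; exact stepu n hm
  have chainv : ∀ (m : ℕ) (hm : m < k) (i : Fin k), (i : ℕ) < m → f (v i) < f (v ⟨m, hm⟩) := by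
    intro m
    induction m with
    | zero => intro _ i hi; exact absurd hi (Nat.not_lt_zero _)
    | succ n ih =>
      intro hm i hi
      rcases Nat.lt_succ_iff_lt_or_eq.mp hi with h' | h'
      · exact (ih (Nat.lt_of_succ_lt hm) i h').trans (stepv n hm)
      · have : i = ⟨n, Nat.lt_of_succ_lt hm⟩ := Fin.ext h'
        rw [this]; exact stepv n hm
  have hcu : ∀ i i' : Fin k, i < i' → f (u i) < f (u i') := by
    intro i i' hii
    have : (i' : Fin k) = ⟨(i' : ℕ), i'.isLt⟩ := Fin.ext rfl
    rw [this]; exact chainu _ i'.isLt i hii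
  have hcv : ∀ i i' : Fin k, i < i' → f (v i) < f (v i') := by
    intro i i' hii
    have : (i' : Fin k) = ⟨(i' : ℕ), i'.isLt⟩ := Fin.ext rfl
    rw [this]; exact chainv _ i'.isLt i hii
  have huvall : ∀ i i' : Fin k, f (u i) < f (v i') := by
    intro i i'
    have h2 : f (u ⟨k - 1, Nat.sub_lt hk Nat.one_pos⟩) < f (v ⟨0, hk⟩) :=
      lt_of_le_of_ne (hmono _ _ huv) (fun heq => hdisj _ _ (hf.1 heq))
    have h1 : f (u i) ≤ f (u ⟨k - 1, Nat.sub_lt hk Nat.one_pos⟩) := by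
      rcases lt_or_eq_of_le (Nat.le_sub_one_of_lt i.isLt) with h | h
      · exact (hcu i _ h).le
      · have : i = ⟨k - 1, Nat.sub_lt hk Nat.one_pos⟩ := Fin.ext h
        rw [this]
    have h3 : f (v ⟨0, hk⟩) ≤ f (v i') := by
      rcases Nat.eq_zero_or_pos (i' : ℕ) with h | h
      · have : i' = ⟨0, hk⟩ := Fin.ext h
        rw [this]
      · exact (hcv ⟨0, hk⟩ i' h).le
    exact h1.trans_lt (h2.trans_le h3)
  have hcross : ∀ i i' : Fin k, i < i' → Crosses f (u i, v i) (u i', v i') := by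
    intro i i' hii
    exact Or.inl ⟨hcu i i' hii, huvall i' i, hcv i i' hii⟩
  have hj : ∀ i : Fin k, c (u i, v i) < j := fun i => hbound _ (hedges i)
  have ginj : Function.Injective (fun i : Fin k => (⟨c (u i, v i), hj i⟩ : Fin j)) := by
    intro a b hab
    simp only [Fin.mk.injEq] at hab
    rcases lt_trichotomy a b with h | h | h
    · exact absurd (hcross a b h) (hvalid _ (hedges a) _ (hedges b) hab)
    · exact h
    · exact absurd (hcross b a h) (hvalid _ (hedges b) _ (hedges a) hab.symm)
  have := Fintype.card_le_of_injective _ ginj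
  simpa using this
end

section
/- Transitive oDAGs—maximal outerplanar DAGs constructed from a base edge by only the transitive stellation operation (stellating edge (u,v) with x adds edges (u,x) and (x,v))—have a single source, a single sink, an edge from the source to the sink, and admit a 1-stack layout. -/
/-- Construction of transitive outerplanar DAGs from base edge `(s,t)` using
only the transitive stellation: stellating `(u,v)` with `x` adds `(u,x),(x,v)`. -/
inductive TRBuild (s t : ℕ) : Finset (ℕ × ℕ) → Finset (ℕ × ℕ) → Prop
  | base (h : s ≠ t) : TRBuild s t {(s, t)} {(s, t)}
  | transitive (E A : Finset (ℕ × ℕ)) (u v x : ℕ) (hE : TRBuild s t E A)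
      (hA : (u, v) ∈ A) (hx : x ∉ verts E) :
      TRBuild s t (insert (u, x) (insert (x, v) E))
        (insert (u, x) (insert (x, v) (A.erase (u, v))))

lemma mem_verts_left {E : Finset (ℕ × ℕ)} {a b : ℕ} (h : (a, b) ∈ E) : a ∈ verts E :=
  Finset.mem_union_left _ (Finset.mem_image_of_mem _ h)

lemma mem_verts_right {E : Finset (ℕ × ℕ)} {a b : ℕ} (h : (a, b) ∈ E) : b ∈ verts E :=
  Finset.mem_union_right _ (Finset.mem_image_of_mem _ h)

lemma verts_insert (e : ℕ × ℕ) (E : Finset (ℕ × ℕ)) :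
    verts (insert e E) = insert e.1 (insert e.2 (verts E)) := by
  unfold verts
  rw [Finset.image_insert, Finset.image_insert, Finset.insert_union, Finset.union_insert]

lemma mem_verts_insert {e : ℕ × ℕ} {E : Finset (ℕ × ℕ)} {w : ℕ} :
    w ∈ verts (insert e E) ↔ w = e.1 ∨ w = e.2 ∨ w ∈ verts E := by
  rw [verts_insert]; simp

lemma trbuild_invariant (s t : ℕ) (E A : Finset (ℕ × ℕ)) (hE : TRBuild s t E A) :
    (s, t) ∈ E ∧ A ⊆ E ∧ (∀ u, (u, s) ∉ E) ∧ (∀ u, (t, u) ∉ E) ∧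
    (∀ v ∈ verts E, v ≠ s → ∃ u, (u, v) ∈ E) ∧
    (∀ v ∈ verts E, v ≠ t → ∃ u, (v, u) ∈ E) ∧
    ∃ f : ℕ → ℕ, Function.Injective f ∧ (∀ e ∈ E, f e.1 < f e.2) ∧
      (∀ e ∈ E, ∀ e' ∈ E, ¬ Crosses f e e') ∧
      (∀ e ∈ A, ∀ w ∈ verts E, ¬ (f e.1 < f w ∧ f w < f e.2)) := by
  induction hE with
  | base h =>
    have hfs : ∀ f : ℕ → ℕ, True := fun _ => trivial
    refine ⟨by simp, le_refl _, ?_, ?_, ?_, ?_, ?_⟩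
    · intro w hw
      simp only [Finset.mem_singleton, Prod.mk.injEq] at hw
      exact h hw.2
    · intro w hw
      simp only [Finset.mem_singleton, Prod.mk.injEq] at hw
      exact h hw.1.symm
    · intro w hw hws
      have : w = s ∨ w = t := by
        have := mem_verts_insert (e := (s,t)) (E := (∅ : Finset (ℕ × ℕ))) (w := w)
        simp [verts] at hw ⊢
        tauto
      rcases this with rfl | rfl
      · exact absurd rfl hws
      · exact ⟨s, by simp⟩
    · intro w hw hwt
      have : w = s ∨ w = t := by simp [verts] at hw; tauto
      rcases this with rfl | rfl
      · exact ⟨t, by simp⟩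
      · exact absurd rfl hwt
    · refine ⟨fun n => if n = s then 0 else if n = t then 1 else n + 2, ?_, ?_, ?_, ?_⟩
      · intro a b hab
        dsimp only at hab
        split_ifs at hab <;> omega
      · intro e he
        simp only [Finset.mem_singleton] at he
        subst he
        simp [h, Ne.symm h]
      · intro e he e' he'
        simp only [Finset.mem_singleton] at he he'
        subst he; subst he'
        simp [Crosses, h, Ne.symm h]
      · intro e he w hw
        simp only [Finset.mem_singleton] at he
        subst he
        have : w = s ∨ w = t := by simp [verts] at hw; tauto
        rcases this with rfl | rfl <;> simp [h, Ne.symm h]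
  | transitive E A u v x hEb hA hx ih =>
    obtain ⟨hst, hAE, hins, houts, hsrc, hsnk, f, finj, ford, fcross, fgap⟩ := ih
    have huv : (u, v) ∈ E := hAE hA
    have hu : u ∈ verts E := mem_verts_left huv
    have hv : v ∈ verts E := mem_verts_right huv
    have hs : s ∈ verts E := mem_verts_left hst
    have ht : t ∈ verts E := mem_verts_right hst
    have hxs : x ≠ s := fun h => hx (h ▸ hs)
    have hxt : x ≠ t := fun h => hx (h ▸ ht)
    have hmemE' : ∀ w, w ∈ verts (insert (u, x) (insert (x, v) E)) ↔
        w = x ∨ w ∈ verts E := by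
      intro w
      rw [mem_verts_insert, mem_verts_insert]
      constructor
      · rintro (rfl | rfl | rfl | rfl | h)
        · exact Or.inr hu
        · exact Or.inl rfl
        · exact Or.inl rfl
        · exact Or.inr hv
        · exact Or.inr h
      · rintro (rfl | h)
        · exact Or.inr (Or.inl rfl)
        · exact Or.inr (Or.inr (Or.inr (Or.inr h)))
    have hmemA' : ∀ e, e ∈ insert (u, x) (insert (x, v) (A.erase (u, v))) →
        e = (u, x) ∨ e = (x, v) ∨ (e ≠ (u, v) ∧ e ∈ A) := by
      intro e he
      rcases Finset.mem_insert.mp he with h | h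
      · exact Or.inl h
      rcases Finset.mem_insert.mp h with h | h
      · exact Or.inr (Or.inl h)
      · exact Or.inr (Or.inr (Finset.mem_erase.mp h))
    refine ⟨?_, ?_, ?_, ?_, ?_, ?_, ?_⟩
    · exact Finset.mem_insert_of_mem (Finset.mem_insert_of_mem hst)
    · intro e he
      rcases hmemA' e he with rfl | rfl | ⟨_, h⟩
      · exact Finset.mem_insert_self _ _
      · exact Finset.mem_insert_of_mem (Finset.mem_insert_self _ _)
      · exact Finset.mem_insert_of_mem (Finset.mem_insert_of_mem (hAE h))
    · intro w hw
      rcases Finset.mem_insert.mp hw with h | h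
      · exact hxs (congrArg Prod.snd h).symm
      rcases Finset.mem_insert.mp h with h | h
      · have hvs : v = s := (congrArg Prod.snd h).symm
        exact hins u (hvs ▸ huv)
      · exact hins w h
    · intro w hw
      rcases Finset.mem_insert.mp hw with h | h
      · have hut : u = t := (congrArg Prod.fst h).symm
        exact houts v (hut ▸ huv)
      rcases Finset.mem_insert.mp h with h | h
      · exact hxt (congrArg Prod.fst h).symm
      · exact houts w h
    · intro w hw hws
      rcases (hmemE' w).mp hw with rfl | h
      · exact ⟨u, Finset.mem_insert_self _ _⟩
      · obtain ⟨p, hp⟩ := hsrc w h hws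
        exact ⟨p, Finset.mem_insert_of_mem (Finset.mem_insert_of_mem hp)⟩
    · intro w hw hwt
      rcases (hmemE' w).mp hw with rfl | h
      · exact ⟨v, Finset.mem_insert_of_mem (Finset.mem_insert_self _ _)⟩
      · obtain ⟨p, hp⟩ := hsnk w h hwt
        exact ⟨p, Finset.mem_insert_of_mem (Finset.mem_insert_of_mem hp)⟩
    · obtain ⟨f', hfx, hfold⟩ : ∃ f' : ℕ → ℕ, f' x = 3 * f u + 1 ∧
          ∀ w, w ≠ x → f' w = 3 * f w :=
        ⟨fun n => if n = x then 3 * f u + 1 else 3 * f n, if_pos rfl,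
          fun w hw => if_neg hw⟩
      have hfo : ∀ w ∈ verts E, f' w = 3 * f w :=
        fun w hw => hfold w (fun h => hx (h ▸ hw))
      have hfu : f' u = 3 * f u := hfo u hu
      have hfv : f' v = 3 * f v := hfo v hv
      have Huv : f u < f v := ford _ huv
      have gap_uv : ∀ w ∈ verts E, ¬ (f u < f w ∧ f w < f v) := fgap _ hA
      refine ⟨f', ?_, ?_, ?_, ?_⟩
      · intro a b hab
        by_cases ha : a = x <;> by_cases hb : b = x
        · rw [ha, hb]
        · rw [ha, hfx, hfold b hb] at hab; omega
        · rw [hb, hfx, hfold a ha] at hab; omega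
        · rw [hfold a ha, hfold b hb] at hab
          exact finj (by omega)
      · intro e he
        rcases Finset.mem_insert.mp he with rfl | he
        · simp [hfu, hfx]
        rcases Finset.mem_insert.mp he with rfl | he
        · simp only [hfx, hfv]; omega
        · obtain ⟨a, b⟩ := e
          have h1 := hfo a (mem_verts_left he)
          have h2 := hfo b (mem_verts_right he)
          have := ford _ he
          simp only at this ⊢
          omega
      · intro e he e' he'
        have key : ∀ a b, (a, b) ∈ E →
            ¬ Crosses f' (u, x) (a, b) ∧ ¬ Crosses f' (a, b) (u, x) ∧
            ¬ Crosses f' (x, v) (a, b) ∧ ¬ Crosses f' (a, b) (x, v) := by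
          intro a b hab
          have h1 := hfo a (mem_verts_left hab)
          have h2 := hfo b (mem_verts_right hab)
          have h3 := ford _ hab
          have h4 := gap_uv a (mem_verts_left hab)
          have h5 := gap_uv b (mem_verts_right hab)
          simp only at h3
          simp only [Crosses, h1, h2, hfx, hfu, hfv]
          omega
        rcases Finset.mem_insert.mp he with rfl | he
        · rcases Finset.mem_insert.mp he' with rfl | he'
          · simp only [Crosses, hfx, hfu]; omega
          rcases Finset.mem_insert.mp he' with rfl | he'
          · simp only [Crosses, hfx, hfu, hfv]; omega
          · obtain ⟨a, b⟩ := e'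
            exact (key a b he').1
        rcases Finset.mem_insert.mp he with rfl | he
        · rcases Finset.mem_insert.mp he' with rfl | he'
          · simp only [Crosses, hfx, hfu, hfv]; omega
          rcases Finset.mem_insert.mp he' with rfl | he'
          · simp only [Crosses, hfx, hfv]; omega
          · obtain ⟨a, b⟩ := e'
            exact (key a b he').2.2.1
        · obtain ⟨a, b⟩ := e
          rcases Finset.mem_insert.mp he' with rfl | he'
          · exact (key a b he).2.1
          rcases Finset.mem_insert.mp he' with rfl | he'
          · exact (key a b he).2.2.2
          · obtain ⟨c, d⟩ := e'
            have h1 := hfo a (mem_verts_left he)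
            have h2 := hfo b (mem_verts_right he)
            have h3 := hfo c (mem_verts_left he')
            have h4 := hfo d (mem_verts_right he')
            have h5 := fcross _ he _ he'
            simp only [Crosses, h1, h2, h3, h4] at h5 ⊢
            omega
      · intro e he w hw
        have hwx : w = x ∨ w ∈ verts E := (hmemE' w).mp hw
        rcases hmemA' e he with rfl | rfl | ⟨hne, heA⟩
        · rcases hwx with rfl | hwv
          · simp only [hfx, hfu]; omega
          · have := hfo w hwv
            simp only [hfx, hfu, this]; omega
        · rcases hwx with rfl | hwv
          · simp only [hfx, hfv]; omega
          · have h1 := hfo w hwv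
            have h2 := gap_uv w hwv
            simp only [hfx, hfv, h1]; omega
        · obtain ⟨a, b⟩ := e
          have habE : (a, b) ∈ E := hAE heA
          have ha := hfo a (mem_verts_left habE)
          have hb := hfo b (mem_verts_right habE)
          rcases hwx with rfl | hwv
          · simp only [hfx, ha, hb]
            rintro ⟨g1, g2⟩
            have gau : f a ≤ f u := by omega
            have gub : f u < f b := by omega
            have g3 := fgap _ heA u hu
            simp only at g3
            have hfa : f a = f u := by omega
            have hau : a = u := finj hfa
            subst hau
            have g4 := fgap _ heA v hv
            have g5 := gap_uv b (mem_verts_right habE)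
            simp only at g4
            have hfb : f b = f v := by omega
            exact hne (by rw [finj hfb])
          · have hwE := hfo w hwv
            have := fgap _ heA w hwv
            simp only at this ⊢
            rw [ha, hb, hwE]
            omega

/-- A transitive oDAG with base edge `(s,t)` has single source `s`, single
sink `t`, an edge from the source to the sink, and a 1-stack layout. -/
theorem transitive_odag_one_stack (s t : ℕ) (E A : Finset (ℕ × ℕ))
    (hE : TRBuild s t E A) :
    (s, t) ∈ E ∧
    (s ∈ verts E ∧ (∀ u, (u, s) ∉ E) ∧
      ∀ v ∈ verts E, (∀ u, (u, v) ∉ E) → v = s) ∧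
    (t ∈ verts E ∧ (∀ u, (t, u) ∉ E) ∧
      ∀ v ∈ verts E, (∀ u, (v, u) ∉ E) → v = t) ∧
    (∃ f, LinExt E f ∧ ∀ e ∈ E, ∀ e' ∈ E, ¬ Crosses f e e') := by
  obtain ⟨hst, _, hins, houts, hsrc, hsnk, f, finj, ford, fcross, _⟩ :=
    trbuild_invariant s t E A hE
  refine ⟨hst, ⟨mem_verts_left hst, hins, ?_⟩,
    ⟨mem_verts_right hst, houts, ?_⟩, ⟨f, ⟨finj, ford⟩, fcross⟩⟩
  · intro w hw hno
    by_contra hws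
    obtain ⟨p, hp⟩ := hsrc w hw hws
    exact hno p hp
  · intro w hw hno
    by_contra hwt
    obtain ⟨p, hp⟩ := hsnk w hw hwt
    exact hno p hp
end
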